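/- Let T ⊆ End^{(1)}_𝕜(M) be a 𝕜-submodule that is stable under multiplication by R (i.e., for every r ∈ R and ξ ∈ T the map z ↦ r·ξ(z) belongs to T), and set T^{(i)} := T ∩ End^{(i)}_𝕜(M) and T^{(i)}(z) := {ξ(z) : ξ ∈ T^{(i)}}. Let z ∈ M with d := ord(z) < ∞, and let N ≥ 0 and i ≥ 0. If the closure of T^{(i+1)}(z) contains M_{N+1+d}, then for every k ≥ 1 the closure of T^{(i+k)}(z) contains M_{N+k+d}. -/
import Mathlib


variable {𝕜 R M : Type*} [CommRing 𝕜] [CommRing R] [Algebra 𝕜 R]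
  [AddCommGroup M] [Module 𝕜 M] [Module R M] [IsScalarTower 𝕜 R M]

/-- `End^{(i)}_𝕜` for the `I`-adic filtration `M_j = I^j • M`. -/
def EndSI (I : Ideal R) (i : ℕ) : Set (Module.End 𝕜 M) :=
  {φ | ∀ j : ℕ, ∀ x ∈ (I ^ j • ⊤ : Submodule R M), φ x ∈ (I ^ (j + i) • ⊤ : Submodule R M)}

/-- `ord(z) = sup {j : z ∈ I^j • M} ∈ ℕ ∪ {∞}`. -/
noncomputable def ordMI (I : Ideal R) (z : M) : ℕ∞ :=
  ⨆ j ∈ {j : ℕ | z ∈ (I ^ j • ⊤ : Submodule R M)}, (j : ℕ∞)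

/-- Closure of a subset in the `I`-adic filtration topology. -/
def clFilI (I : Ideal R) (X : Set M) : Set M :=
  {m | ∀ j : ℕ, 1 ≤ j → ∃ x ∈ X, m - x ∈ (I ^ j • ⊤ : Submodule R M)}

/-- `T^{(i)}(z) = {ξ(z) : ξ ∈ T ∩ End^{(i)}}`. -/
def TOrbitI (I : Ideal R) (T : Submodule 𝕜 (Module.End 𝕜 M)) (i : ℕ) (z : M) :
    Set M :=
  {m | ∃ ξ : Module.End 𝕜 M, ξ ∈ T ∧ ξ ∈ (EndSI I i : Set (Module.End 𝕜 M)) ∧ ξ z = m}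

/-- for the `I`-adic filtration `M_j = I^j·M`, if `T ⊆ End^{(1)}_𝕜(M)` is a
𝕜-submodule stable under multiplication by `R`, `z` has finite order `d`, and the
closure of `T^{(i+1)}(z)` contains `M_{N+1+d}`, then for every `k ≥ 1` the closure of
`T^{(i+k)}(z)` contains `M_{N+k+d}`. -/
theorem statement13 (I : Ideal R)
    (T : Submodule 𝕜 (Module.End 𝕜 M))
    (hT : (T : Set (Module.End 𝕜 M)) ⊆ EndSI I 1)
    (hTR : ∀ r : R, ∀ ξ : Module.End 𝕜 M, ξ ∈ T →
      ∃ η ∈ T, ∀ z : M, η z = r • ξ z)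
    (z : M) (d : ℕ) (hz : ordMI I z = (d : ℕ∞)) (N i : ℕ)
    (hcl : ↑(I ^ (N + 1 + d) • ⊤ : Submodule R M) ⊆ clFilI I (TOrbitI I T (i + 1) z)) :
    ∀ k : ℕ, 1 ≤ k →
      ↑(I ^ (N + k + d) • ⊤ : Submodule R M) ⊆ clFilI I (TOrbitI I T (i + k) z) := by
  intro k hk
  induction k with
  | zero => omega
  | succ k ih =>
    rcases Nat.eq_or_lt_of_le hk with h1 | h1
    · -- k + 1 = 1
      have : k = 0 := by omega
      subst this
      exact hcl
    · have hk1 : 1 ≤ k := by omega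
      have IH := ih hk1
      intro m hm
      -- m ∈ I^(N+(k+1)+d) • ⊤ = I • (I^(N+k+d) • ⊤)
      have hmem : m ∈ (I • (I ^ (N + k + d) • ⊤) : Submodule R M) := by
        have : (N + (k + 1) + d) = (N + k + d) + 1 := by omega
        rw [this] at hm
        rw [pow_succ', mul_smul] at hm
        exact hm
      -- prove closure membership by smul induction
      refine Submodule.smul_induction_on hmem ?_ ?_
      · intro r hr p hp
        intro j hj
        obtain ⟨x, ⟨ξ, hξT, hξE, hξz⟩, hpx⟩ := IH hp j hj
        obtain ⟨η, hηT, hη⟩ := hTR r ξ hξT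
        refine ⟨η z, ⟨η, hηT, ?_, rfl⟩, ?_⟩
        · intro j' x' hx'
          rw [hη]
          have : ξ x' ∈ (I ^ (j' + (i + k)) • ⊤ : Submodule R M) := hξE j' x' hx'
          have h2 : r • ξ x' ∈ (I • (I ^ (j' + (i + k)) • ⊤) : Submodule R M) :=
            Submodule.smul_mem_smul hr this
          rw [← mul_smul, ← pow_succ'] at h2
          have he : j' + (i + (k + 1)) = j' + (i + k) + 1 := by omega
          rw [he]
          exact h2
        · rw [hη, hξz, ← smul_sub]
          exact Submodule.smul_mem _ r hpx
      · intro x y hx hy j hj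
        obtain ⟨a, ⟨ξ, hξT, hξE, hξz⟩, hxa⟩ := hx j hj
        obtain ⟨b, ⟨ζ, hζT, hζE, hζz⟩, hyb⟩ := hy j hj
        refine ⟨(ξ + ζ) z, ⟨ξ + ζ, T.add_mem hξT hζT, ?_, rfl⟩, ?_⟩
        · intro j' x' hx'
          simp only [LinearMap.add_apply]
          exact Submodule.add_mem _ (hξE j' x' hx') (hζE j' x' hx')
        · simp only [LinearMap.add_apply]
          rw [← hξz] at hxa
          rw [← hζz] at hyb
          have := Submodule.add_mem _ hxa hyb
          convert this using 1
          abel
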